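/- Let f_m, f be integrable log-concave functions on ℝⁿ such that f_m → f pointwise. Then for every s with 0 < s < ‖f‖_∞, the super-level sets G_{f_m}(s) converge in Hausdorff distance to G_f(s). -/

import Mathlib

open MeasureTheory Filter Metric Set
noncomputable section

/-- `ℝⁿ` as a Euclidean space. -/
abbrev Euc (n : ℕ) := EuclideanSpace ℝ (Fin n)

lemma lc_convex {n : ℕ} {f : Euc n → ℝ}
    (hlc : ∀ x y : Euc n, ∀ a b : ℝ, 0 ≤ a → 0 ≤ b → a + b = 1 →
      f x ^ a * f y ^ b ≤ f (a • x + b • y)) {s : ℝ} (hs : 0 < s) :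
    Convex ℝ {x | s ≤ f x} := by
  intro x hx y hy a b ha hb hab
  have h := hlc x y a b ha hb hab
  have h2 : s ^ a * s ^ b ≤ f x ^ a * f y ^ b :=
    mul_le_mul (Real.rpow_le_rpow hs.le hx ha) (Real.rpow_le_rpow hs.le hy hb)
      (Real.rpow_nonneg hs.le b) (Real.rpow_nonneg (hs.le.trans hx) a)
  show s ≤ f (a • x + b • y)
  calc s = s ^ a * s ^ b := by rw [← Real.rpow_add hs, hab, Real.rpow_one]
  _ ≤ f x ^ a * f y ^ b := h2
  _ ≤ _ := h

/-- Vertices of the cross-polytope centered at `z` with radius `δ`, plus the center. -/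
def pts {n : ℕ} (z : Euc n) (δ : ℝ) : Option (Fin n × Bool) → Euc n
  | none => z
  | some (i, b) => z + (if b then δ else -δ) • EuclideanSpace.single i (1 : ℝ)

lemma pts_mem_closedBall {n : ℕ} (z : Euc n) {δ : ℝ} (hδ : 0 ≤ δ) (j : Option (Fin n × Bool)) :
    pts z δ j ∈ closedBall z δ := by
  rcases j with _ | ⟨i, b⟩
  · simpa [pts] using hδ
  · simp only [pts, mem_closedBall, dist_eq_norm, add_sub_cancel_left, norm_smul,
      EuclideanSpace.norm_single, norm_one, mul_one]
    rcases b with _ | _ <;> simp [abs_of_nonneg hδ, abs_of_nonpos (neg_nonpos.2 hδ)]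

lemma abs_coord_le_norm {n : ℕ} (v : Euc n) (i : Fin n) : |v i| ≤ ‖v‖ := by
  rw [EuclideanSpace.norm_eq, ← Real.sqrt_sq_eq_abs]
  apply Real.sqrt_le_sqrt
  have h : v i ^ 2 = ‖v i‖ ^ 2 := by rw [Real.norm_eq_abs, sq_abs]
  rw [h]
  exact Finset.single_le_sum (f := fun j => ‖v j‖ ^ 2) (fun j _ => by positivity)
    (Finset.mem_univ i)

lemma sum_coord_smul_single {n : ℕ} (v : Euc n) :
    ∑ i : Fin n, v i • EuclideanSpace.single i (1 : ℝ) = v := by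
  have h := (EuclideanSpace.basisFun (Fin n) ℝ).sum_repr v
  simpa using h

lemma closedBall_subset_hull {n : ℕ} (z : Euc n) {δ : ℝ} (hδ : 0 < δ) :
    closedBall z (δ / (n + 1)) ⊆ convexHull ℝ (Set.range (pts z δ)) := by
  intro x hx
  obtain ⟨v, rfl⟩ : ∃ v : Euc n, x = z + v := ⟨x - z, by abel⟩
  have hvnorm : ‖v‖ ≤ δ / (n + 1) := by
    simpa [dist_eq_norm, add_sub_cancel_left] using hx
  classical
  set w : Option (Fin n × Bool) → ℝ := fun j =>
    match j with
    | none => 1 - ∑ i : Fin n, |v i| / δ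
    | some (i, b) => (if b then max (v i) 0 else max (-(v i)) 0) / δ with hwdef
  have hwnone : w none = 1 - ∑ i : Fin n, |v i| / δ := rfl
  have hwt : ∀ i, w (some (i, true)) = max (v i) 0 / δ := fun i => rfl
  have hwf : ∀ i, w (some (i, false)) = max (-(v i)) 0 / δ := fun i => rfl
  have habs : ∀ i, max (v i) 0 / δ + max (-(v i)) 0 / δ = |v i| / δ := by
    intro i
    rw [← add_div]
    congr 1
    rcases le_total 0 (v i) with h | h
    · rw [max_eq_left h, max_eq_right (by linarith), add_zero, abs_of_nonneg h]
    · rw [max_eq_right h, max_eq_left (by linarith), zero_add, abs_of_nonpos h]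
  have hsumabs : ∑ i : Fin n, |v i| / δ ≤ 1 := by
    have h1 : ∑ i : Fin n, |v i| ≤ ∑ _i : Fin n, ‖v‖ :=
      Finset.sum_le_sum fun i _ => abs_coord_le_norm v i
    have h2 : (∑ _i : Fin n, ‖v‖ : ℝ) = n * ‖v‖ := by simp [mul_comm]
    have h3 : (n : ℝ) * ‖v‖ ≤ n * (δ / (n + 1)) :=
      mul_le_mul_of_nonneg_left hvnorm (by positivity)
    have h4 : (n : ℝ) * (δ / (n + 1)) ≤ δ := by
      rw [mul_div_assoc', div_le_iff₀ (by positivity)]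
      nlinarith [hδ.le]
    rw [← Finset.sum_div, div_le_one hδ]
    exact (h1.trans_eq h2).trans (h3.trans h4)
  have hw0 : ∀ j ∈ (Finset.univ : Finset (Option (Fin n × Bool))), 0 ≤ w j := by
    rintro (_ | ⟨i, b⟩) -
    · rw [hwnone]; linarith
    · rcases b with _ | _
      · rw [hwf]; positivity
      · rw [hwt]; positivity
  have hsum_some : ∑ p : Fin n × Bool, w (some p) = ∑ i : Fin n, |v i| / δ := by
    rw [Fintype.sum_prod_type]
    refine Finset.sum_congr rfl fun i _ => ?_
    rw [Fintype.sum_bool, hwt, hwf, habs]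
  have hwsum : ∑ j : Option (Fin n × Bool), w j = 1 := by
    rw [Fintype.sum_option, hwnone, hsum_some]; ring
  have key : ∑ j : Option (Fin n × Bool), w j • pts z δ j = z + v := by
    rw [Fintype.sum_option]
    have hptt : ∀ i, pts z δ (some (i, true)) = z + δ • EuclideanSpace.single i (1:ℝ) := by
      intro i; simp [pts]
    have hptf : ∀ i, pts z δ (some (i, false)) = z + (-δ) • EuclideanSpace.single i (1:ℝ) := by
      intro i; simp [pts]
    have hsome : ∑ p : Fin n × Bool, w (some p) • pts z δ (some p)
        = (∑ i : Fin n, |v i| / δ) • z + v := by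
      rw [Fintype.sum_prod_type]
      have hterm : ∀ i : Fin n, (∑ b : Bool, w (some (i, b)) • pts z δ (some (i, b)))
          = (|v i| / δ) • z + v i • EuclideanSpace.single i (1 : ℝ) := by
        intro i
        rw [Fintype.sum_bool, hwt, hwf, hptt, hptf]
        rw [smul_add, smul_add, smul_smul, smul_smul, ← add_assoc]
        have e1 : (max (v i) 0 / δ) • z + (max (v i) 0 / δ * δ) • EuclideanSpace.single i (1:ℝ)
              + (max (-(v i)) 0 / δ) • z + (max (-(v i)) 0 / δ * -δ) • EuclideanSpace.single i (1:ℝ)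
            = (max (v i) 0 / δ + max (-(v i)) 0 / δ) • z
              + (max (v i) 0 / δ * δ + max (-(v i)) 0 / δ * -δ) • EuclideanSpace.single i (1:ℝ) := by
          rw [add_smul, add_smul]; abel
        rw [e1, habs]
        congr 1
        congr 1
        have hδ' : δ ≠ 0 := hδ.ne'
        rcases le_total 0 (v i) with h | h
        · rw [max_eq_left h, max_eq_right (by linarith)]; field_simp; simp
        · rw [max_eq_right h, max_eq_left (by linarith)]; field_simp; simp
      rw [Finset.sum_congr rfl (fun i _ => hterm i), Finset.sum_add_distrib,
        ← Finset.sum_smul, sum_coord_smul_single]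
    have hnone : w none • pts z δ none = (1 - ∑ i : Fin n, |v i| / δ) • z := by
      rw [hwnone]; rfl
    rw [hnone, hsome, ← add_assoc, ← add_smul]
    have : (1 - ∑ i : Fin n, |v i| / δ) + ∑ i : Fin n, |v i| / δ = 1 := by ring
    rw [this, one_smul]
  have hmem := Finset.centerMass_mem_convexHull (Finset.univ : Finset (Option (Fin n × Bool)))
    hw0 (by rw [hwsum]; norm_num) (fun j _ => Set.mem_range_self (f := pts z δ) j)
  rwa [Finset.centerMass_eq_of_sum_1 _ _ hwsum, key] at hmem

lemma lc_ball_superlevel {n : ℕ} {f : Euc n → ℝ}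
    (hlc : ∀ x y : Euc n, ∀ a b : ℝ, 0 ≤ a → 0 ≤ b → a + b = 1 →
      f x ^ a * f y ^ b ≤ f (a • x + b • y)) {s : ℝ} (hs : 0 < s)
    {z : Euc n} {δ : ℝ} (hδ : 0 < δ) (hv : ∀ j, s ≤ f (pts z δ j)) :
    ∀ x ∈ closedBall z (δ / (n + 1)), s ≤ f x := by
  intro x hx
  have h1 : Set.range (pts z δ) ⊆ {x | s ≤ f x} := by
    rintro _ ⟨j, rfl⟩; exact hv j
  exact convexHull_min h1 (lc_convex hlc hs) (closedBall_subset_hull z hδ hx)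


lemma compact_finite_net {n : ℕ} {A : Set (Euc n)} (hA : IsCompact A) {δ : ℝ} (hδ : 0 < δ) :
    ∃ Q : Set (Euc n), Q ⊆ A ∧ Q.Finite ∧ A ⊆ ⋃ q ∈ Q, ball q δ := by
  obtain ⟨Q, hQA, hQfin, hcov⟩ := totallyBounded_iff_subset.1 hA.totallyBounded _
    (Metric.dist_mem_uniformity hδ)
  exact ⟨Q, hQA, hQfin, hcov⟩


/-- `f` is a non-degenerate, upper semicontinuous, integrable log-concave
function on `ℝⁿ` (the class `LC`): `f ≥ 0`, `f` is upper semicontinuous,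
log-concave, integrable with `0 < ∫ f`, and the interior of its support is
non-empty. -/
def IsLC {n : ℕ} (f : Euc n → ℝ) : Prop :=
  (∀ x, 0 ≤ f x) ∧ UpperSemicontinuous f ∧
  (∀ x y : Euc n, ∀ a b : ℝ, 0 ≤ a → 0 ≤ b → a + b = 1 →
      f x ^ a * f y ^ b ≤ f (a • x + b • y)) ∧
  Integrable f ∧ 0 < ∫ x, f x ∧ (interior (Function.support f)).Nonempty

set_option maxHeartbeats 1000000 in
/-- if integrable log-concave `f_m → f` pointwise, then for
`0 < s < ‖f‖_∞`, the super-level sets `G_{f_m}(s)` converge to `G_f(s)` in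
Hausdorff distance. -/
theorem superlevel_hausdorff_convergence (n : ℕ) (F : ℕ → Euc n → ℝ) (f : Euc n → ℝ)
    (hF : ∀ m, IsLC (F m)) (hf : IsLC f)
    (hptw : ∀ x, Tendsto (fun m => F m x) atTop (nhds (f x)))
    (s : ℝ) (hs : 0 < s) (hs' : s < ⨆ x, f x) :
    Tendsto (fun m => Metric.hausdorffDist {x | s ≤ F m x} {x | s ≤ f x})
      atTop (nhds 0) := by
  classical
  obtain ⟨hf0, hfusc, hflc, hfint, hfpos, hfsupp⟩ := hf
  set K := {x : Euc n | s ≤ f x} with hKdef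
  have hKclosed : IsClosed K := by
    have hKeq : K = (f ⁻¹' Iio s)ᶜ := by
      ext x; simp [hKdef, not_lt]
    rw [hKeq]
    exact (hfusc.isOpen_preimage s).isClosed_compl
  -- interior point of the support, and a small ball with a positive lower bound
  obtain ⟨z, hz⟩ := hfsupp
  obtain ⟨δz, hδz, hballz⟩ := Metric.isOpen_iff.1 isOpen_interior z hz
  obtain ⟨δ0, hδ0def⟩ : ∃ a : ℝ, a = δz / 2 := ⟨_, rfl⟩
  have hδ0 : 0 < δ0 := by rw [hδ0def]; positivity
  have hδ0sub : closedBall z δ0 ⊆ Function.support f := fun x hx =>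
    interior_subset (hballz ((closedBall_subset_ball (by rw [hδ0def]; linarith)) hx))
  have hptpos : ∀ j, 0 < f (pts z δ0 j) := by
    intro j
    have hne := hδ0sub (pts_mem_closedBall z hδ0.le j)
    exact lt_of_le_of_ne (hf0 _) (Ne.symm hne)
  obtain ⟨c0, hc0def⟩ : ∃ a : ℝ, a = (Finset.univ : Finset (Option (Fin n × Bool))).inf'
    Finset.univ_nonempty (fun j => f (pts z δ0 j)) := ⟨_, rfl⟩
  have hc0pos : 0 < c0 := by
    rw [hc0def, Finset.lt_inf'_iff]
    exact fun j _ => hptpos j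
  have hc0le : ∀ j, c0 ≤ f (pts z δ0 j) := fun j => by
    rw [hc0def]; exact Finset.inf'_le _ (Finset.mem_univ j)
  -- a point with value above s
  have hbdd : BddAbove (Set.range f) := by
    by_contra hb
    rw [Real.iSup_of_not_bddAbove hb] at hs'
    linarith
  obtain ⟨x1, hx1⟩ : ∃ x, s < f x := (lt_ciSup_iff hbdd).1 hs'
  have hfx1pos : 0 < f x1 := hs.trans hx1
  -- choose t1 < 1 with c0^(1-t1) * (f x1)^t1 > s
  set g : ℝ → ℝ := fun t => Real.exp ((1 - t) * Real.log c0 + t * Real.log (f x1)) with hgdef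
  have hgcont : Continuous g := by fun_prop
  have hg1 : g 1 = f x1 := by
    simp [hgdef, Real.exp_log hfx1pos]
  have hev : ∀ᶠ t in nhds 1, s < g t :=
    (hgcont.tendsto 1).eventually (eventually_gt_nhds (by rw [hg1]; exact hx1))
  obtain ⟨δt, hδt, hδtprop⟩ := Metric.eventually_nhds_iff.1 hev
  obtain ⟨t1, ht1def⟩ : ∃ a : ℝ, a = 1 - min δt 1 / 2 := ⟨_, rfl⟩
  have hmin : 0 < min δt 1 := lt_min hδt one_pos
  have hmin1 : min δt 1 ≤ 1 := min_le_right _ _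
  have ht1lt : t1 < 1 := by rw [ht1def]; linarith
  have ht1pos : 0 < t1 := by rw [ht1def]; linarith
  have hgt1 : s < g t1 := by
    apply hδtprop
    rw [Real.dist_eq, ht1def]
    rw [abs_of_nonpos (by linarith)]
    have hd : min δt 1 ≤ δt := min_le_left _ _
    linarith
  have hrpow_exp : ∀ c : ℝ, 0 < c → ∀ t : ℝ, c ^ t = Real.exp (t * Real.log c) := by
    intro c hc t
    rw [Real.rpow_def_of_pos hc, mul_comm]
  obtain ⟨s1, hs1def⟩ : ∃ a : ℝ, a = c0 ^ (1 - t1) * f x1 ^ t1 := ⟨_, rfl⟩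
  have hs1eq : s1 = g t1 := by
    rw [hs1def, hgdef, hrpow_exp c0 hc0pos, hrpow_exp (f x1) hfx1pos, ← Real.exp_add]
  have hss1 : s < s1 := by rw [hs1eq]; exact hgt1
  have hs1pos : 0 < s1 := hs.trans hss1
  -- the ball around x0 where f ≥ s1
  obtain ⟨x0, hx0def⟩ : ∃ a : Euc n, a = (1 - t1) • z + t1 • x1 := ⟨_, rfl⟩
  obtain ⟨δ1, hδ1def⟩ : ∃ a : ℝ, a = (1 - t1) * δ0 := ⟨_, rfl⟩
  have hδ1pos : 0 < δ1 := by
    rw [hδ1def]; exact mul_pos (by linarith) hδ0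
  have hq : ∀ j, pts x0 δ1 j = (1 - t1) • pts z δ0 j + t1 • x1 := by
    rintro (_ | ⟨i, b⟩)
    · show x0 = (1 - t1) • z + t1 • x1
      rw [hx0def]
    · show x0 + (if b then δ1 else -δ1) • EuclideanSpace.single i (1:ℝ)
        = (1 - t1) • (z + (if b then δ0 else -δ0) • EuclideanSpace.single i (1:ℝ)) + t1 • x1
      have hcoef : (if b then δ1 else -δ1) = (1 - t1) * (if b then δ0 else -δ0) := by
        rcases b with _ | _ <;> simp [hδ1def] <;> ring
      rw [hcoef, hx0def, smul_add, smul_smul]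
      abel
  have hvert1 : ∀ j, s1 ≤ f (pts x0 δ1 j) := by
    intro j
    have h1 : c0 ^ (1 - t1) ≤ f (pts z δ0 j) ^ (1 - t1) :=
      Real.rpow_le_rpow hc0pos.le (hc0le j) (by linarith)
    have h2 := hflc (pts z δ0 j) x1 (1 - t1) t1 (by linarith) ht1pos.le (by ring)
    rw [← hq j] at h2
    calc s1 ≤ f (pts z δ0 j) ^ (1 - t1) * f x1 ^ t1 := by
          rw [hs1def]
          exact mul_le_mul_of_nonneg_right h1 (Real.rpow_nonneg hfx1pos.le _)
    _ ≤ _ := h2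
  obtain ⟨ρ1, hρ1def⟩ : ∃ a : ℝ, a = δ1 / (n + 1) := ⟨_, rfl⟩
  have hρ1pos : 0 < ρ1 := by
    rw [hρ1def]; positivity
  have hball1 : ∀ x ∈ closedBall x0 ρ1, s1 ≤ f x := by
    rw [hρ1def]
    exact lc_ball_superlevel hflc hs1pos hδ1pos hvert1
  have hx0K : x0 ∈ K := by
    have := hball1 x0 (mem_closedBall_self hρ1pos.le)
    exact le_of_lt (lt_of_lt_of_le hss1 this)
  -- the level set K is bounded
  obtain ⟨v0, hv0def⟩ : ∃ a : ENNReal, a = volume (ball (0 : Euc n) (ρ1 / 2)) := ⟨_, rfl⟩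
  have hv0pos : 0 < v0 := by
    rw [hv0def]; exact measure_ball_pos _ _ (by positivity)
  have hv0top : v0 ≠ ⊤ := by
    rw [hv0def]; exact measure_ball_lt_top.ne
  have hv0topos : 0 < v0.toReal := ENNReal.toReal_pos hv0pos.ne' hv0top
  obtain ⟨I, hIdef⟩ : ∃ a : ℝ, a = ∫ x, f x := ⟨_, rfl⟩
  obtain ⟨N, hNdef⟩ : ∃ a : ℕ, a = ⌈I / (s * v0.toReal)⌉₊ + 1 := ⟨_, rfl⟩
  obtain ⟨R, hRdef⟩ : ∃ a : ℝ, a = 2 * N * ρ1 := ⟨_, rfl⟩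
  have hNpos : (0:ℝ) < N := by
    have h0 : 0 < N := by rw [hNdef]; omega
    exact_mod_cast h0
  have hRpos : 0 < R := by
    rw [hRdef]
    exact mul_pos (by linarith only [hNpos]) hρ1pos
  have hKR : ∀ y ∈ K, dist y x0 ≤ R := by
    intro y hy
    by_contra hyR
    push_neg at hyR
    obtain ⟨L, hLdef⟩ : ∃ a : ℝ, a = dist y x0 := ⟨_, rfl⟩
    rw [← hLdef] at hyR
    have hLpos : 0 < L := hRpos.trans hyR
    obtain ⟨u, hudef⟩ : ∃ a : Euc n, a = y - x0 := ⟨_, rfl⟩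
    have hu : ‖u‖ = L := by rw [hudef, hLdef, dist_eq_norm]
    obtain ⟨m, hmi⟩ : ∃ m : ℕ → Euc n, ∀ i : ℕ, m i = x0 + (((i:ℝ) * ρ1) / L) • u :=
      ⟨fun i => x0 + (((i:ℝ) * ρ1) / L) • u, fun i => rfl⟩
    have hmem : ∀ i < N, ∀ x ∈ ball (m i) (ρ1 / 2), s ≤ f x := by
      intro i hiN x hx
      obtain ⟨lam, hlamdef⟩ : ∃ a : ℝ, a = ((i : ℝ) * ρ1) / L := ⟨_, rfl⟩
      have hmi' : m i = x0 + lam • u := by rw [hmi i, hlamdef]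
      have hlam0 : 0 ≤ lam := by
        rw [hlamdef]
        exact div_nonneg (mul_nonneg (Nat.cast_nonneg i) hρ1pos.le) hLpos.le
      have hiN' : (i : ℝ) ≤ (N : ℝ) - 1 := by
        have hcast : (i : ℝ) + 1 ≤ N := by exact_mod_cast hiN
        linarith
      have hlamle : lam ≤ 1 / 2 := by
        rw [hlamdef, div_le_iff₀ hLpos]
        have h2 : R ≤ L := hyR.le
        rw [hRdef] at h2
        have e1 : (i:ℝ) * ρ1 ≤ ((N:ℝ) - 1) * ρ1 := mul_le_mul_of_nonneg_right hiN' hρ1pos.le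
        linarith only [e1, h2, hρ1pos.le]
      have h1lam : (0:ℝ) < 1 - lam := by linarith
      obtain ⟨p, hpdef⟩ : ∃ a : Euc n, a = x0 + (1 / (1 - lam)) • (x - m i) := ⟨_, rfl⟩
      have hplem : x = (1 - lam) • p + lam • y := by
        rw [hpdef, hmi', hudef, smul_add, smul_smul]
        have hco : (1 - lam) * (1 / (1 - lam)) = 1 := by
          field_simp
        rw [hco, one_smul]
        module
      have hpball : p ∈ closedBall x0 ρ1 := by
        rw [hpdef, mem_closedBall]
        have hd : dist (x0 + (1 / (1 - lam)) • (x - m i)) x0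
            = (1 / (1 - lam)) * ‖x - m i‖ := by
          rw [dist_eq_norm, add_sub_cancel_left, norm_smul, Real.norm_eq_abs,
            abs_of_nonneg (div_nonneg zero_le_one h1lam.le)]
        rw [hd]
        have hxm : ‖x - m i‖ ≤ ρ1 / 2 := by
          have hb := mem_ball.1 hx
          rw [dist_eq_norm] at hb
          linarith
        have hfrac : 1 / (1 - lam) ≤ 2 := by
          rw [div_le_iff₀ h1lam]
          linarith
        calc 1 / (1 - lam) * ‖x - m i‖ ≤ 2 * (ρ1 / 2) :=
          mul_le_mul hfrac hxm (norm_nonneg _) (by norm_num)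
        _ = ρ1 := by ring
      have hfp : s ≤ f p := le_of_lt (lt_of_lt_of_le hss1 (hball1 p hpball))
      have hcomb := lc_convex hflc hs hfp hy (by linarith : (0:ℝ) ≤ 1 - lam) hlam0 (by ring)
      rwa [← hplem] at hcomb
    have hdisj : (↑(Finset.range N) : Set ℕ).Pairwise
        (Function.onFun Disjoint fun i => ball (m i) (ρ1/2)) := by
      intro i _ j _ hij
      have hmij : m i - m j = ((((i:ℝ) - j) * ρ1) / L) • u := by
        rw [hmi i, hmi j]
        rw [add_sub_add_left_eq_sub, ← sub_smul]
        congr 1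
        field_simp
      have hdist : dist (m i) (m j) = |(i:ℝ) - j| * ρ1 := by
        rw [dist_eq_norm, hmij, norm_smul, Real.norm_eq_abs, hu, abs_div, abs_mul,
          abs_of_nonneg hρ1pos.le, abs_of_nonneg hLpos.le]
        field_simp
      have hone : (1:ℝ) ≤ |(i:ℝ) - j| := by
        have hcast : (i:ℝ) - j = (((i:ℤ) - (j:ℤ) : ℤ) : ℝ) := by push_cast; ring
        rw [hcast, ← Int.cast_abs]
        have hz1 : (1:ℤ) ≤ |(i:ℤ) - (j:ℤ)| :=
          Int.one_le_abs (sub_ne_zero.2 (by exact_mod_cast hij))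
        exact_mod_cast hz1
      refine ball_disjoint_ball ?_
      rw [hdist]
      have := mul_le_mul_of_nonneg_right hone hρ1pos.le
      linarith only [this]
    have hint : ∀ i ∈ Finset.range N, s * v0.toReal ≤ ∫ x in ball (m i) (ρ1/2), f x := by
      intro i hi
      have h1 := setIntegral_ge_of_const_le (μ := volume) measurableSet_ball
        measure_ball_lt_top.ne (fun x hx => hmem i (Finset.mem_range.1 hi) x hx)
        hfint.integrableOn
      have h2 : volume (ball (m i) (ρ1/2)) = v0 := by
        rw [hv0def]; exact Measure.addHaar_ball_center volume (m i) _
      simpa only [Measure.real, h2, smul_eq_mul, mul_comm] using h1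
    have hsum : ∫ x in ⋃ i ∈ Finset.range N, ball (m i) (ρ1/2), f x
        = ∑ i ∈ Finset.range N, ∫ x in ball (m i) (ρ1/2), f x :=
      integral_biUnion_finset _ (fun i _ => measurableSet_ball) hdisj
        (fun i _ => hfint.integrableOn)
    have hle : ∫ x in ⋃ i ∈ Finset.range N, ball (m i) (ρ1/2), f x ≤ I := by
      rw [hIdef]
      exact setIntegral_le_integral hfint (Filter.Eventually.of_forall hf0)
    have hNI : (N : ℝ) * (s * v0.toReal) ≤ I := by
      calc (N:ℝ) * (s * v0.toReal) = ∑ _i ∈ Finset.range N, s * v0.toReal := by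
            rw [Finset.sum_const, Finset.card_range, nsmul_eq_mul]
      _ ≤ ∑ i ∈ Finset.range N, ∫ x in ball (m i) (ρ1/2), f x := Finset.sum_le_sum hint
      _ = _ := hsum.symm
      _ ≤ I := hle
    have hsv : 0 < s * v0.toReal := by positivity
    have hNle : (N:ℝ) ≤ I / (s * v0.toReal) := by
      rw [le_div_iff₀ hsv]; exact hNI
    have hceil : I / (s * v0.toReal) ≤ (⌈I / (s * v0.toReal)⌉₊ : ℝ) := Nat.le_ceil _
    have hNder : (N : ℝ) = (⌈I / (s * v0.toReal)⌉₊ : ℝ) + 1 := by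
      rw [hNdef]; push_cast; ring
    rw [hNder] at hNle
    linarith only [hNle, hceil]
  have hKsub : K ⊆ closedBall x0 R := fun y hy => hKR y hy
  have hKcompact : IsCompact K :=
    Metric.isCompact_of_isClosed_isBounded hKclosed (isBounded_closedBall.subset hKsub)
  have hKne : K.Nonempty := ⟨x0, hx0K⟩
  -- the ball of radius ρ2 on which (eventually) F m ≥ s
  obtain ⟨ρ2, hρ2def⟩ : ∃ a : ℝ, a = ρ1 / (n + 1) := ⟨_, rfl⟩
  have hρ2pos : 0 < ρ2 := by rw [hρ2def]; positivity
  have hρ2ρ1 : ρ2 ≤ ρ1 := by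
    rw [hρ2def, div_le_iff₀ (by positivity : (0:ℝ) < (n:ℝ) + 1)]
    have h1n : (1:ℝ) ≤ (n:ℝ) + 1 := by
      have := Nat.cast_nonneg (α := ℝ) n
      linarith only [this]
    have := mul_le_mul_of_nonneg_left h1n hρ1pos.le
    linarith only [this]
  have hE2 : ∀ᶠ m in atTop, ∀ j, s ≤ F m (pts x0 ρ1 j) := by
    rw [eventually_all]
    intro j
    have hjval : s < f (pts x0 ρ1 j) := by
      have hj := hball1 _ (pts_mem_closedBall x0 hρ1pos.le j)
      exact lt_of_lt_of_le hss1 hj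
    exact ((hptw _).eventually_const_lt hjval).mono fun m hm => hm.le
  -- now the ε-argument
  rw [Metric.tendsto_atTop]
  intro ε hε
  obtain ⟨ε', hε'def⟩ : ∃ a : ℝ, a = ε / 2 := ⟨_, rfl⟩
  have hε'pos : 0 < ε' := by rw [hε'def]; positivity
  -- Direction A: the homothety
  obtain ⟨t, htdef⟩ : ∃ a : ℝ, a = min (1/2 : ℝ) (ε' / (R + 1)) := ⟨_, rfl⟩
  have htpos : 0 < t := by
    rw [htdef]
    exact lt_min (by norm_num) (div_pos hε'pos (by linarith only [hRpos]))
  have htle : t ≤ 1/2 := by rw [htdef]; exact min_le_left _ _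
  have htle' : t ≤ ε' / (R + 1) := by rw [htdef]; exact min_le_right _ _
  have ht1' : t < 1 := lt_of_le_of_lt htle (by norm_num)
  set hmap : Euc n → Euc n := fun x => (1 - t) • x + t • x0 with hhdef
  have hmapcont : Continuous hmap := by
    rw [hhdef]; fun_prop
  obtain ⟨s2, hs2def⟩ : ∃ a : ℝ, a = s ^ (1 - t) * s1 ^ t := ⟨_, rfl⟩
  have hs2gt : s < s2 := by
    have hseq : s = s ^ (1 - t) * s ^ t := by
      rw [← Real.rpow_add hs]; norm_num
    rw [hs2def]
    conv_lhs => rw [hseq]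
    exact mul_lt_mul_of_pos_left (Real.rpow_lt_rpow hs.le hss1 htpos)
      (Real.rpow_pos_of_pos hs _)
  have hnbhd : ∀ x ∈ K, ∀ w ∈ closedBall (hmap x) (t * ρ1), s2 ≤ f w := by
    intro x hx w hw
    obtain ⟨vv, hvvdef⟩ : ∃ a : Euc n, a = (1 / t) • (w - hmap x) := ⟨_, rfl⟩
    have hvvnorm : ‖vv‖ ≤ ρ1 := by
      rw [hvvdef, norm_smul, Real.norm_eq_abs, abs_of_nonneg (div_nonneg zero_le_one htpos.le)]
      have hwn : ‖w - hmap x‖ ≤ t * ρ1 := by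
        have hb := mem_closedBall.1 hw
        rwa [dist_eq_norm] at hb
      rw [div_mul_eq_mul_div, one_mul, div_le_iff₀ htpos]
      linarith [hwn]
    have hw' : w = (1 - t) • x + t • (x0 + vv) := by
      rw [hvvdef, smul_add, smul_smul]
      have hco : t * (1 / t) = 1 := by field_simp
      rw [hco, one_smul, hhdef]
      show w = (1 - t) • x + (t • x0 + (w - ((1-t) • x + t • x0)))
      module
    have h2 := hflc x (x0 + vv) (1 - t) t (by linarith) htpos.le (by ring)
    rw [← hw'] at h2
    have hx0vv : x0 + vv ∈ closedBall x0 ρ1 := by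
      rw [mem_closedBall, dist_eq_norm, add_sub_cancel_left]
      exact hvvnorm
    calc s2 ≤ f x ^ (1 - t) * f (x0 + vv) ^ t := by
          rw [hs2def]
          exact mul_le_mul (Real.rpow_le_rpow hs.le hx (by linarith))
            (Real.rpow_le_rpow hs1pos.le (hball1 _ hx0vv) htpos.le)
            (Real.rpow_nonneg hs1pos.le _) (Real.rpow_nonneg (hs.le.trans hx) _)
    _ ≤ f w := h2
  have hhK : IsCompact (hmap '' K) := hKcompact.image hmapcont
  have htρ1pos : (0:ℝ) < t * ρ1 := mul_pos htpos hρ1pos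
  obtain ⟨P, hPsub, hPfin, hPcover⟩ := compact_finite_net hhK
    (div_pos htρ1pos (by positivity : (0:ℝ) < (n:ℝ) + 1))
  have hE1 : ∀ᶠ mm in atTop, ∀ p ∈ P, ∀ j, s ≤ F mm (pts p (t * ρ1) j) := by
    rw [eventually_all_finite hPfin]
    intro p hp
    rw [eventually_all]
    intro j
    have hfval : s < f (pts p (t * ρ1) j) := by
      obtain ⟨x, hxK, hpx⟩ := hPsub hp
      have hmem' : pts p (t * ρ1) j ∈ closedBall (hmap x) (t * ρ1) := by
        rw [hpx]
        exact pts_mem_closedBall p htρ1pos.le j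
      exact lt_of_lt_of_le hs2gt (hnbhd x hxK _ hmem')
    exact ((hptw _).eventually_const_lt hfval).mono fun mm hmm => hmm.le
  -- Direction B: the outer net
  obtain ⟨M, hMdef⟩ : ∃ a : ℝ, a = R + ρ2 + ε' + 1 := ⟨_, rfl⟩
  have hMpos : 0 < M := by
    rw [hMdef]; linarith only [hRpos, hρ2pos, hε'pos]
  have hMR : R + ε' / 2 ≤ M := by
    rw [hMdef]; linarith only [hρ2pos, hε'pos]
  obtain ⟨τ, hτdef⟩ : ∃ a : ℝ, a = min (1/2 : ℝ) (ε' / (2 * (2 * M + ρ2))) := ⟨_, rfl⟩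
  have hτpos : 0 < τ := by
    rw [hτdef]
    exact lt_min (by norm_num) (div_pos hε'pos (by linarith only [hMpos, hρ2pos]))
  have hτle : τ ≤ 1/2 := by rw [hτdef]; exact min_le_left _ _
  have hτ2M : τ * (2 * M) ≤ ε' / 2 := by
    have h1 : τ ≤ ε' / (2 * (2 * M + ρ2)) := by rw [hτdef]; exact min_le_right _ _
    have h2 : τ * (2 * M) ≤ (ε' / (2 * (2 * M + ρ2))) * (2 * M) :=
      mul_le_mul_of_nonneg_right h1 (by linarith only [hMpos])
    have h3 : (ε' / (2 * (2 * M + ρ2))) * (2 * M) ≤ ε' / 2 := by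
      rw [div_mul_eq_mul_div, div_le_div_iff₀ (by linarith only [hMpos, hρ2pos]) (by norm_num)]
      have hprod : 0 ≤ ε' * ρ2 := mul_nonneg hε'pos.le hρ2pos.le
      linarith only [hprod]
    linarith only [h2, h3]
  obtain ⟨δB, hδBdef⟩ : ∃ a : ℝ, a = τ * ρ2 / 2 := ⟨_, rfl⟩
  have hδBpos : 0 < δB := by
    rw [hδBdef]
    exact div_pos (mul_pos hτpos hρ2pos) two_pos
  set A' : Set (Euc n) := {x | dist x x0 ≤ 2 * M ∧ ε' / 2 ≤ infDist x K} with hA'def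
  have hA'closed : IsClosed A' := by
    have hint : A' = {x : Euc n | dist x x0 ≤ 2 * M} ∩ {x : Euc n | ε' / 2 ≤ infDist x K} := rfl
    rw [hint]
    exact IsClosed.inter (isClosed_le (by fun_prop) continuous_const)
      (isClosed_le continuous_const (continuous_infDist_pt K))
  have hA'cpt : IsCompact A' :=
    Metric.isCompact_of_isClosed_isBounded hA'closed
      (isBounded_closedBall.subset (fun x hx => hx.1))
  obtain ⟨Q, hQsub, hQfin, hQcover⟩ := compact_finite_net hA'cpt hδBpos
  have hQs : ∀ q ∈ Q, f q < s := by
    intro q hq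
    by_contra hle
    push_neg at hle
    have hqK : q ∈ K := hle
    have h2 := (hQsub hq).2
    rw [infDist_zero_of_mem hqK] at h2
    linarith only [h2, hε'pos]
  have hE3 : ∀ᶠ mm in atTop, ∀ q ∈ Q, F mm q < s := by
    rw [eventually_all_finite hQfin]
    exact fun q hq => (hptw q).eventually_lt_const (hQs q hq)
  -- combine
  have hEV := (hE1.and (hE2.and hE3))
  rw [eventually_atTop] at hEV
  obtain ⟨N0, hN0⟩ := hEV
  refine ⟨N0, fun mm hmm => ?_⟩
  obtain ⟨hm1, hm2, hm3⟩ := hN0 mm hmm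
  have hFlc := (hF mm).2.2.1
  -- F mm ≥ s on the fixed ball
  have hFball : ∀ x ∈ closedBall x0 ρ2, s ≤ F mm x := by
    rw [hρ2def]
    exact lc_ball_superlevel hFlc hs hρ1pos hm2
  -- Direction A conclusion
  have hdirA : ∀ x ∈ K, ∃ w ∈ {x | s ≤ F mm x}, dist x w ≤ ε' := by
    intro x hx
    refine ⟨hmap x, ?_, ?_⟩
    · have hhx : hmap x ∈ ⋃ p ∈ P, ball p (t * ρ1 / (n + 1)) :=
        hPcover (mem_image_of_mem hmap hx)
      rw [mem_iUnion₂] at hhx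
      obtain ⟨p, hp, hball⟩ := hhx
      exact lc_ball_superlevel hFlc hs htρ1pos
        (fun j => hm1 p hp j) (hmap x) (ball_subset_closedBall hball)
    · have hxw : x - hmap x = t • (x - x0) := by
        rw [hhdef]
        show x - ((1 - t) • x + t • x0) = t • (x - x0)
        module
      rw [dist_eq_norm, hxw, norm_smul, Real.norm_eq_abs, abs_of_nonneg htpos.le]
      have hdx : ‖x - x0‖ ≤ R := by
        have hd := hKR x hx
        rwa [dist_eq_norm] at hd
      calc t * ‖x - x0‖ ≤ (ε' / (R + 1)) * R :=
            mul_le_mul htle' hdx (norm_nonneg _) (by positivity)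
      _ ≤ ε' := by
            rw [div_mul_eq_mul_div, div_le_iff₀ (by linarith only [hRpos])]
            have hprod : 0 ≤ ε' * R := mul_nonneg hε'pos.le hRpos.le
            linarith only [hprod, hε'pos.le, hRpos.le]
  -- Direction B conclusion
  have hdirB : ∀ y, s ≤ F mm y → infDist y K ≤ ε' := by
    intro y hy
    by_contra hc
    push_neg at hc
    obtain ⟨L, hLdef⟩ : ∃ a : ℝ, a = dist y x0 := ⟨_, rfl⟩
    have hL0 : 0 ≤ L := hLdef ▸ dist_nonneg
    have hseg : ∀ lam : ℝ, 0 ≤ lam → lam < 1 →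
        ∀ w ∈ closedBall (x0 + lam • (y - x0)) ((1 - lam) * ρ2), s ≤ F mm w := by
      intro lam h0 h1 w hw
      have h1lam : (0:ℝ) < 1 - lam := by linarith
      obtain ⟨p, hpdef⟩ : ∃ a : Euc n,
        a = x0 + (1 / (1 - lam)) • (w - (x0 + lam • (y - x0))) := ⟨_, rfl⟩
      have hpball : p ∈ closedBall x0 ρ2 := by
        rw [hpdef, mem_closedBall, dist_eq_norm, add_sub_cancel_left, norm_smul,
          Real.norm_eq_abs, abs_of_nonneg (div_nonneg zero_le_one h1lam.le)]
        have hwn : ‖w - (x0 + lam • (y - x0))‖ ≤ (1 - lam) * ρ2 := by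
          have hb := mem_closedBall.1 hw
          rwa [dist_eq_norm] at hb
        rw [div_mul_eq_mul_div, one_mul, div_le_iff₀ h1lam]
        calc ‖w - (x0 + lam • (y - x0))‖ ≤ (1 - lam) * ρ2 := hwn
        _ = ρ2 * (1 - lam) := by ring
      have hweq : w = (1 - lam) • p + lam • y := by
        rw [hpdef, smul_add, smul_smul]
        have hco : (1 - lam) * (1 / (1 - lam)) = 1 := by
          field_simp
        rw [hco, one_smul]
        module
      have hcomb := lc_convex hFlc hs (hFball p hpball) hy
        (by linarith : (0:ℝ) ≤ 1 - lam) h0 (by ring)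
      rwa [← hweq] at hcomb
    rcases le_or_gt (2 * M) L with hL2M | hL2M
    · -- far case
      have hLpos : 0 < L := lt_of_lt_of_le (by linarith only [hMpos]) hL2M
      obtain ⟨lam, hlamdef⟩ : ∃ a : ℝ, a = M / L := ⟨_, rfl⟩
      have hlam0 : 0 ≤ lam := by
        rw [hlamdef]; exact div_nonneg hMpos.le hLpos.le
      have hlamle : lam ≤ 1/2 := by
        rw [hlamdef, div_le_iff₀ hLpos]; linarith only [hL2M]
      obtain ⟨c, hcdef⟩ : ∃ a : Euc n, a = x0 + lam • (y - x0) := ⟨_, rfl⟩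
      have hcd : dist c x0 = M := by
        rw [hcdef, dist_eq_norm, add_sub_cancel_left, norm_smul, Real.norm_eq_abs,
          abs_of_nonneg hlam0, ← dist_eq_norm, ← hLdef, hlamdef]
        field_simp
      have hcA : c ∈ A' := by
        constructor
        · rw [hcd]; linarith only [hMpos]
        · obtain ⟨k, hkK, hkd⟩ := hKcompact.exists_infDist_eq_dist hKne c
          rw [hkd]
          have htri : dist c x0 ≤ dist c k + dist k x0 := dist_triangle _ _ _
          have hkR : dist k x0 ≤ R := hKR k hkK
          rw [hcd] at htri
          linarith only [htri, hkR, hMR, hε'pos]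
      have hcQ := hQcover hcA
      rw [mem_iUnion₂] at hcQ
      obtain ⟨q, hqQ, hqball⟩ := hcQ
      have hqmem : q ∈ closedBall c ((1 - lam) * ρ2) := by
        rw [mem_closedBall]
        have hqd : dist q c < δB := by
          have hb := mem_ball.1 hqball
          rwa [dist_comm] at hb
        have hδBle : δB ≤ (1 - lam) * ρ2 := by
          rw [hδBdef]
          have e1 : τ * ρ2 ≤ (1/2) * ρ2 := mul_le_mul_of_nonneg_right hτle hρ2pos.le
          have e2 : lam * ρ2 ≤ (1/2) * ρ2 := mul_le_mul_of_nonneg_right hlamle hρ2pos.le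
          have e3 : (1 - lam) * ρ2 = ρ2 - lam * ρ2 := by ring
          linarith only [e1, e2, e3, hρ2pos.le]
        linarith only [hqd, hδBle]
      have hqs := hseg lam hlam0 (by linarith only [hlamle]) q (hcdef ▸ hqmem)
      exact absurd hqs (not_le.2 (hm3 q hqQ))
    · -- near case
      obtain ⟨lam, hlamdef⟩ : ∃ a : ℝ, a = 1 - τ := ⟨_, rfl⟩
      have hlam0 : 0 ≤ lam := by rw [hlamdef]; linarith only [hτle]
      have hlamlt : lam < 1 := by rw [hlamdef]; linarith only [hτpos]
      obtain ⟨c, hcdef⟩ : ∃ a : Euc n, a = x0 + lam • (y - x0) := ⟨_, rfl⟩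
      have hcy : dist c y = τ * L := by
        have hcyv : c - y = (lam - 1) • (y - x0) := by
          rw [hcdef]
          module
        rw [dist_eq_norm, hcyv, norm_smul, Real.norm_eq_abs, hlamdef]
        rw [show (1 - τ - 1 : ℝ) = -τ by ring, abs_neg, abs_of_nonneg hτpos.le,
          ← dist_eq_norm, ← hLdef]
      have hcyle : dist c y ≤ ε' / 2 := by
        rw [hcy]
        have e1 : τ * L ≤ τ * (2 * M) := mul_le_mul_of_nonneg_left hL2M.le hτpos.le
        linarith only [e1, hτ2M]
      have hcA : c ∈ A' := by
        constructor
        · have hcx : dist c x0 = lam * L := by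
            rw [hcdef, dist_eq_norm, add_sub_cancel_left, norm_smul, Real.norm_eq_abs,
              abs_of_nonneg hlam0, ← dist_eq_norm, ← hLdef]
          rw [hcx]
          have e1 : lam * L ≤ 1 * L := mul_le_mul_of_nonneg_right hlamlt.le hL0
          linarith only [e1, hL2M]
        · have htri : infDist y K ≤ infDist c K + dist y c := infDist_le_infDist_add_dist
          rw [dist_comm y c] at htri
          linarith only [htri, hcyle, hc]
      have hcQ := hQcover hcA
      rw [mem_iUnion₂] at hcQ
      obtain ⟨q, hqQ, hqball⟩ := hcQ
      have hqmem : q ∈ closedBall c ((1 - lam) * ρ2) := by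
        rw [mem_closedBall]
        have hqd : dist q c < δB := by
          have hb := mem_ball.1 hqball
          rwa [dist_comm] at hb
        have hδBle : δB ≤ (1 - lam) * ρ2 := by
          rw [hδBdef, hlamdef]
          have e0 : (1 - (1 - τ)) * ρ2 = τ * ρ2 := by ring
          rw [e0]
          have e1 : 0 ≤ τ * ρ2 := mul_nonneg hτpos.le hρ2pos.le
          linarith only [e1]
        linarith only [hqd, hδBle]
      have hqs := hseg lam hlam0 hlamlt q (hcdef ▸ hqmem)
      exact absurd hqs (not_le.2 (hm3 q hqQ))
  -- conclude with the Hausdorff distance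
  have hHD : Metric.hausdorffDist {x | s ≤ F mm x} K ≤ ε' := by
    apply Metric.hausdorffDist_le_of_mem_dist hε'pos.le
    · intro w hw
      obtain ⟨xk, hxk, hdk⟩ := hKcompact.exists_infDist_eq_dist hKne w
      exact ⟨xk, hxk, by rw [← hdk]; exact hdirB w hw⟩
    · intro x hx
      obtain ⟨w, hwm, hd⟩ := hdirA x hx
      exact ⟨w, hwm, hd⟩
  have hnn : 0 ≤ Metric.hausdorffDist {x | s ≤ F mm x} K := Metric.hausdorffDist_nonneg
  rw [Real.dist_eq, sub_zero, abs_of_nonneg hnn]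
  calc Metric.hausdorffDist {x | s ≤ F mm x} K ≤ ε' := hHD
  _ < ε := by rw [hε'def]; linarith only [hε]
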